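/- Let η ∈ (0,1), ℓ, m, N ∈ ℕ, δ = 2^{−ℓmN}, and β₁ ∈ [0, 1). Let B ⊂ (δ·ℤ) ∩ [0,1] with |B| = δ^{−β₁}, and let B′ ⊂ B be a subset with |B′| ≥ δ^η |B| which is (ℓm, N)-uniform and (η, ℓm, N)-polarised. Let 𝒩_{B′} denote the family of maximal intervals 𝓘 ⊂ {0,…,N−1} such that R_{B′}^{ℓm}(σ) = 1 for all σ ∈ 𝓘, and for an interval 𝓘 = {σ,…,τ} ⊂ {0,…,N−1} write ℓ𝓘 := {ℓσ, ℓσ+1, …, ℓ(τ+1)−1} ⊂ {0,…,ℓN−1}. Then the family ℓ𝒩_{B′} := {ℓ𝓘 : 𝓘 ∈ 𝒩_{B′}} consists of pairwise disjoint intervals whose total length satisfies Σ_{𝓙 ∈ ℓ𝒩_{B′}} |𝓙| ≥ (1 − β₁/(1−η))·ℓN. -/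

import Mathlib

open MeasureTheory Set Pointwise

/-- The dyadic interval of scale `r > 0` with index `k`, i.e. `[k·r, (k+1)·r)`. -/
def dyI (r : ℝ) (k : ℤ) : Set ℝ := Set.Ico ((k : ℝ) * r) (((k : ℝ) + 1) * r)

/-- The covering number `|E|_r`: the number of dyadic intervals of side length `r`
needed to cover `E` (equivalently, meeting `E`). -/
noncomputable def cov (r : ℝ) (E : Set ℝ) : ℕ := Nat.card {k : ℤ | (E ∩ dyI r k).Nonempty}

/-- The lattice `δ·ℤ`. -/
def lat (δ : ℝ) : Set ℝ := {x : ℝ | ∃ z : ℤ, x = δ * (z : ℝ)}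

/-- `A` is `(m, N)`-uniform with branching numbers `R`. -/
def uniform (m N : ℕ) (A : Set ℝ) (R : ℕ → ℕ) : Prop :=
  ∀ s : ℕ, s < N → ∀ k : ℤ, (A ∩ dyI ((2:ℝ) ^ (-(m * s : ℤ))) k).Nonempty →
    cov ((2:ℝ) ^ (-(m * (s + 1) : ℤ))) (A ∩ dyI ((2:ℝ) ^ (-(m * s : ℤ))) k) = R s

/-- `(η, m, N)`-polarisation for branching numbers `RA`, `RB`. A single set `B` with
branching numbers `R` is `(η,m,N)`-polarised iff `polarised η m N R R`. -/
def polarised (η : ℝ) (m N : ℕ) (RA RB : ℕ → ℕ) : Prop :=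
  ∀ s : ℕ, s < N → 1 < RB s → (2:ℝ) ^ ((1 - η) * (m : ℝ)) ≤ (RA s : ℝ)

/-- The family `𝒩` of maximal intervals `{a,…,b} ⊆ {0,…,N−1}` on which `R ≡ 1`,
encoded as the set of pairs `(a, b)` of endpoints. -/
noncomputable def maxOnes (N : ℕ) (R : ℕ → ℕ) : Finset (ℕ × ℕ) := by
  classical
  exact (Finset.range N ×ˢ Finset.range N).filter (fun p =>
    p.1 ≤ p.2 ∧ (∀ σ : ℕ, p.1 ≤ σ → σ ≤ p.2 → R σ = 1) ∧
    (p.1 = 0 ∨ R (p.1 - 1) ≠ 1) ∧ (p.2 + 1 = N ∨ R (p.2 + 1) ≠ 1))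

/-- For an interval `𝓘 = {σ,…,τ}` encoded as the pair `(σ,τ)`, the rescaled interval
`ℓ𝓘 = {ℓσ, …, ℓ(τ+1) − 1}`, encoded as the finset `Ico (ℓσ) (ℓ(τ+1))`. -/
def ellI (ℓ : ℕ) (p : ℕ × ℕ) : Finset ℕ := Finset.Ico (ℓ * p.1) (ℓ * (p.2 + 1))

/-! Uniformity makes covering numbers multiply along the scales,
`|B'|_{2^{-M(s+1)}} = R(s) · |B'|_{2^{-Ms}}` with `M = ℓm`, so `∏ R(s) ≤ |B'| ≤ |B| = 2^{MNβ₁}`.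
By polarisation each of the `K` levels with `R(s) ≠ 1` contributes a factor at least
`2^{(1-η)M}`, whence `(1-η) K ≤ β₁ N`. The maximal intervals of `𝒩_{B'}` partition the other
`N - K` levels, and rescaling by `ℓ` multiplies every length by `ℓ`. -/

open scoped Finset

lemma mem_dyI_iff {r : ℝ} (hr : 0 < r) {x : ℝ} {k : ℤ} : x ∈ dyI r k ↔ ⌊x / r⌋ = k := by
  rw [Int.floor_eq_iff, dyI, mem_Ico, le_div_iff₀ hr, div_lt_iff₀ hr]

lemma cov_eq_ncard_image {r : ℝ} (hr : 0 < r) (E : Set ℝ) :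
    cov r E = ((fun x => ⌊x / r⌋) '' E).ncard := by
  rw [cov, Nat.card_coe_set_eq]
  congr 1
  ext k
  simp [Set.Nonempty, mem_dyI_iff hr]

lemma cov_le_ncard {r : ℝ} (hr : 0 < r) {E : Set ℝ} (hE : E.Finite) : cov r E ≤ E.ncard := by
  rw [cov_eq_ncard_image hr]
  exact Set.ncard_image_le hE

lemma cov_pos {r : ℝ} (hr : 0 < r) {E : Set ℝ} (hE : E.Finite) (hne : E.Nonempty) :
    0 < cov r E := by
  rw [cov_eq_ncard_image hr]
  exact (Set.ncard_pos (hE.image _)).2 (hne.image _)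

lemma floor_div_two_zpow_neg_mul (M s : ℕ) (x : ℝ) :
    ⌊x / (2:ℝ) ^ (-(M * s : ℤ))⌋ = ⌊x / (2:ℝ) ^ (-(M * (s + 1) : ℤ))⌋ / (2 ^ M : ℕ) := by
  rw [← Int.floor_div_natCast, div_div]
  congr 2
  push_cast
  rw [← zpow_natCast, ← zpow_add₀ two_ne_zero]
  ring_nf

section Uniform

variable {M N : ℕ} {A : Set ℝ} {R : ℕ → ℕ}

lemma one_le_of_uniform (hA : A.Finite) (hne : A.Nonempty) (hu : uniform M N A R) {s : ℕ}
    (hs : s < N) : 1 ≤ R s := by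
  obtain ⟨x, hx⟩ := hne
  have hr : (0:ℝ) < (2:ℝ) ^ (-(M * s : ℤ)) := by positivity
  have hxk : (A ∩ dyI _ _).Nonempty := ⟨x, hx, (mem_dyI_iff hr).2 rfl⟩
  rw [← hu s hs _ hxk]
  exact cov_pos (by positivity) (hA.inter_of_left _) hxk

lemma cov_succ_of_uniform (hA : A.Finite) (hu : uniform M N A R) {s : ℕ} (hs : s < N) :
    cov ((2:ℝ) ^ (-(M * (s + 1) : ℤ))) A = R s * cov ((2:ℝ) ^ (-(M * s : ℤ))) A := by
  classical
  have hr : (0:ℝ) < (2:ℝ) ^ (-(M * s : ℤ)) := by positivity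
  have hr' : (0:ℝ) < (2:ℝ) ^ (-(M * (s + 1) : ℤ)) := by positivity
  rw [cov_eq_ncard_image hr, cov_eq_ncard_image hr', ← hA.coe_toFinset, ← Finset.coe_image,
    ← Finset.coe_image, Set.ncard_coe_finset, Set.ncard_coe_finset]
  set f : ℝ → ℤ := fun x => ⌊x / (2:ℝ) ^ (-(M * s : ℤ))⌋
  set f' : ℝ → ℤ := fun x => ⌊x / (2:ℝ) ^ (-(M * (s + 1) : ℤ))⌋
  -- each level-`s` interval is split into `2 ^ M` level-`(s+1)` intervals
  have hf : (fun j : ℤ => j / (2 ^ M : ℕ)) ∘ f' = f :=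
    funext fun x => (floor_div_two_zpow_neg_mul M s x).symm
  rw [Finset.card_eq_sum_card_image (fun j : ℤ => j / (2 ^ M : ℕ)), Finset.image_image, hf,
    Finset.sum_const_nat, mul_comm]
  intro k hk
  obtain ⟨x, hx, rfl⟩ := Finset.mem_image.1 hk
  have hfib : (hA.toFinset.filter (fun y => f y = f x) : Set ℝ) =
      A ∩ dyI ((2:ℝ) ^ (-(M * s : ℤ))) (f x) := by
    ext y
    simp only [Finset.coe_filter, Set.Finite.mem_toFinset, Set.mem_ofPred_eq, Set.mem_inter_iff,
      mem_dyI_iff hr]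
    rfl
  have hne : (A ∩ dyI ((2:ℝ) ^ (-(M * s : ℤ))) (f x)).Nonempty :=
    ⟨x, hA.mem_toFinset.1 hx, (mem_dyI_iff hr).2 rfl⟩
  rw [Finset.filter_image, ← hu s hs _ hne, cov_eq_ncard_image hr', ← hfib, ← Finset.coe_image,
    Set.ncard_coe_finset]
  simp only [← hf, Function.comp_apply]
  rfl

lemma cov_eq_prod_mul_of_uniform (hA : A.Finite) (hu : uniform M N A R) {n : ℕ} (hn : n ≤ N) :
    cov ((2:ℝ) ^ (-(M * n : ℤ))) A = (∏ s ∈ Finset.range n, R s) * cov 1 A := by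
  induction n with
  | zero => simp
  | succ n ih =>
    rw [Nat.cast_succ, cov_succ_of_uniform hA hu (by omega), ih (by omega), Finset.prod_range_succ,
      mul_comm (R n), mul_assoc, mul_assoc, mul_comm (R n)]

lemma prod_le_ncard_of_uniform (hA : A.Finite) (hne : A.Nonempty) (hu : uniform M N A R) :
    ∏ s ∈ Finset.range N, R s ≤ A.ncard :=
  calc ∏ s ∈ Finset.range N, R s ≤ (∏ s ∈ Finset.range N, R s) * cov 1 A :=
        Nat.le_mul_of_pos_right _ (cov_pos one_pos hA hne)
    _ = cov ((2:ℝ) ^ (-(M * N : ℤ))) A := (cov_eq_prod_mul_of_uniform hA hu le_rfl).symm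
    _ ≤ A.ncard := cov_le_ncard (by positivity) hA

end Uniform

open Finset in
lemma pow_card_filter_ne_one_le_prod {N : ℕ} {R : ℕ → ℕ} {c : ℝ} (hc : 0 ≤ c)
    (hR : ∀ s < N, 1 ≤ R s) (hcR : ∀ s < N, 1 < R s → c ≤ R s) :
    c ^ #{s ∈ range N | R s ≠ 1} ≤ ∏ s ∈ range N, (R s : ℝ) :=
  calc c ^ #{s ∈ range N | R s ≠ 1} = ∏ _s ∈ range N with R _s ≠ 1, c := (prod_const c).symm
    _ ≤ ∏ s ∈ range N with R s ≠ 1, (R s : ℝ) := by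
        refine prod_le_prod (fun _ _ => hc) fun s hs => ?_
        obtain ⟨hs, hs1⟩ := mem_filter.1 hs
        exact hcR s (mem_range.1 hs) (lt_of_le_of_ne (hR s (mem_range.1 hs)) (Ne.symm hs1))
    _ ≤ ∏ s ∈ range N, (R s : ℝ) :=
        prod_le_prod_of_subset_of_one_le (filter_subset _ _) (fun _ _ => Nat.cast_nonneg _)
          fun s hs _ => Nat.one_le_cast.2 (hR s (mem_range.1 hs))

open Finset in
lemma one_sub_mul_card_ne_one_le_of_uniform {η β : ℝ} (hβ : 0 ≤ β) {M N : ℕ} {A : Set ℝ}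
    {R : ℕ → ℕ} (hA : A.Finite) (hne : A.Nonempty) (hu : uniform M N A R)
    (hpol : polarised η M N R R) (hcard : (A.ncard : ℝ) ≤ 2 ^ (M * N * β)) :
    (1 - η) * #{s ∈ range N | R s ≠ 1} ≤ β * N := by
  have hR : ∀ s < N, 1 ≤ R s := fun s hs => one_le_of_uniform hA hne hu hs
  have hprod : ∏ s ∈ range N, (R s : ℝ) ≤ 2 ^ (M * N * β) := by
    refine le_trans ?_ hcard
    exact_mod_cast prod_le_ncard_of_uniform hA hne hu
  rcases Nat.eq_zero_or_pos M with rfl | hM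
  · -- with `M = 0` the bound reads `|A| ≤ 1`, which leaves no room for branching
    have h := (pow_card_filter_ne_one_le_prod zero_le_two hR fun s _ hs => by
      exact_mod_cast hs).trans hprod
    have hK : #{s ∈ range N | R s ≠ 1} = 0 := by
      by_contra hK
      simp only [Nat.cast_zero, zero_mul, Real.rpow_zero] at h
      exact (one_lt_pow₀ one_lt_two hK).not_ge h
    rw [hK]
    simp only [CharP.cast_eq_zero, mul_zero]
    positivity
  · have h := (pow_card_filter_ne_one_le_prod (by positivity) hR hpol).trans hprod
    rw [← Real.rpow_natCast, ← Real.rpow_mul zero_le_two, Real.rpow_le_rpow_left_iff one_lt_two]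
      at h
    exact le_of_mul_le_mul_left (by linarith) (Nat.cast_pos.2 hM : (0:ℝ) < M)

section MaxOnes

variable {N : ℕ} {R : ℕ → ℕ}

lemma maxOnes_mem_iff {p : ℕ × ℕ} :
    p ∈ maxOnes N R ↔ p.1 < N ∧ p.2 < N ∧ p.1 ≤ p.2 ∧
      (∀ σ : ℕ, p.1 ≤ σ → σ ≤ p.2 → R σ = 1) ∧
      (p.1 = 0 ∨ R (p.1 - 1) ≠ 1) ∧ (p.2 + 1 = N ∨ R (p.2 + 1) ≠ 1) := by
  simp only [maxOnes, Finset.mem_filter, Finset.mem_product, Finset.mem_range, and_assoc]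

lemma eq_of_mem_maxOnes {p q : ℕ × ℕ} (hp : p ∈ maxOnes N R) (hq : q ∈ maxOnes N R) {σ : ℕ}
    (hpσ : p.1 ≤ σ ∧ σ ≤ p.2) (hqσ : q.1 ≤ σ ∧ σ ≤ q.2) : p = q := by
  obtain ⟨-, hpN, -, hp1, hpl, hpr⟩ := maxOnes_mem_iff.1 hp
  obtain ⟨-, hqN, -, hq1, hql, hqr⟩ := maxOnes_mem_iff.1 hq
  ext
  · by_contra hne
    rcases Nat.lt_or_gt_of_ne hne with h | h
    · exact hql.resolve_left (by omega) (hp1 (q.1 - 1) (by omega) (by omega))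
    · exact hpl.resolve_left (by omega) (hq1 (p.1 - 1) (by omega) (by omega))
  · by_contra hne
    rcases Nat.lt_or_gt_of_ne hne with h | h
    · exact hpr.resolve_left (by omega) (hq1 (p.2 + 1) (by omega) (by omega))
    · exact hqr.resolve_left (by omega) (hp1 (q.2 + 1) (by omega) (by omega))

lemma maxOnes_separated {p q : ℕ × ℕ} (hp : p ∈ maxOnes N R) (hq : q ∈ maxOnes N R)
    (hpq : p ≠ q) : p.2 < q.1 ∨ q.2 < p.1 := by
  by_contra! h
  have hp' := (maxOnes_mem_iff.1 hp).2.2.1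
  have hq' := (maxOnes_mem_iff.1 hq).2.2.1
  exact hpq (eq_of_mem_maxOnes hp hq (σ := max p.1 q.1) ⟨by omega, by omega⟩ ⟨by omega, by omega⟩)

lemma exists_mem_maxOnes {s : ℕ} (hs : s < N) (hR : R s = 1) :
    ∃ p ∈ maxOnes N R, p.1 ≤ s ∧ s ≤ p.2 := by
  classical
  let P : ℕ → Prop := fun a => a ≤ s ∧ ∀ σ, a ≤ σ → σ ≤ s → R σ = 1
  let Q : ℕ → Prop := fun b => s ≤ b ∧ ∀ σ, s ≤ σ → σ ≤ b → R σ = 1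
  have hP : ∃ a, P a := ⟨s, le_rfl, fun σ h1 h2 => le_antisymm h2 h1 ▸ hR⟩
  have hQ : Q s := ⟨le_rfl, fun σ h1 h2 => le_antisymm h2 h1 ▸ hR⟩
  obtain ⟨has, ha⟩ := Nat.find_spec hP
  obtain ⟨hsb, hb⟩ : Q (Nat.findGreatest Q (N - 1)) :=
    Nat.findGreatest_spec (P := Q) (show s ≤ N - 1 by omega) hQ
  have hbN : Nat.findGreatest Q (N - 1) ≤ N - 1 := Nat.findGreatest_le _
  refine ⟨(Nat.find hP, Nat.findGreatest Q (N - 1)), maxOnes_mem_iff.2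
    ⟨by omega, by omega, by omega, fun σ h1 h2 => ?_, ?_, ?_⟩, has, hsb⟩
  · rcases le_total σ s with h | h
    exacts [ha σ h1 h, hb σ h h2]
  · by_contra! h
    refine Nat.find_min hP (show Nat.find hP - 1 < Nat.find hP by omega)
      ⟨by omega, fun σ h1 h2 => ?_⟩
    obtain rfl | h1 := eq_or_lt_of_le h1
    exacts [h.2, ha σ (by omega) h2]
  · by_contra! h
    refine Nat.findGreatest_is_greatest (P := Q) (k := Nat.findGreatest Q (N - 1) + 1)
      (Nat.lt_succ_self _) (by omega) ⟨by omega, fun σ h1 h2 => ?_⟩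
    obtain rfl | h2 := eq_or_lt_of_le h2
    exacts [h.2, hb σ h1 (by omega)]

lemma sum_card_ellI_maxOnes (ℓ : ℕ) :
    ∑ p ∈ maxOnes N R, (ellI ℓ p).card = ℓ * #{s ∈ Finset.range N | R s = 1} := by
  have hcard : ∀ p ∈ maxOnes N R, (ellI ℓ p).card = ℓ * (Finset.Icc p.1 p.2).card := by
    intro p _
    rw [ellI, Nat.card_Ico, Nat.card_Icc, Nat.mul_sub]
  rw [Finset.sum_congr rfl hcard, ← Finset.mul_sum, ← Finset.card_biUnion]
  · congr 2
    ext s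
    simp only [Finset.mem_biUnion, Finset.mem_Icc, Finset.mem_filter, Finset.mem_range]
    constructor
    · rintro ⟨p, hp, hps⟩
      obtain ⟨-, hpN, -, hp1, -⟩ := maxOnes_mem_iff.1 hp
      exact ⟨by omega, hp1 s hps.1 hps.2⟩
    · rintro ⟨hs, hR⟩
      exact exists_mem_maxOnes hs hR
  · intro p hp q hq hpq
    rw [Function.onFun, Finset.disjoint_left]
    intro σ hσp hσq
    rw [Finset.mem_Icc] at hσp hσq
    exact hpq (eq_of_mem_maxOnes hp hq hσp hσq)

lemma disjoint_ellI_of_mem_maxOnes (ℓ : ℕ) {p q : ℕ × ℕ} (hp : p ∈ maxOnes N R)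
    (hq : q ∈ maxOnes N R) (hpq : p ≠ q) : Disjoint (ellI ℓ p) (ellI ℓ q) := by
  rw [Finset.disjoint_left]
  intro a hap haq
  rw [ellI, Finset.mem_Ico] at hap haq
  rcases maxOnes_separated hp hq hpq with h | h
  · have : ℓ * (p.2 + 1) ≤ ℓ * q.1 := Nat.mul_le_mul_left ℓ h
    omega
  · have : ℓ * (q.2 + 1) ≤ ℓ * p.1 := Nat.mul_le_mul_left ℓ h
    omega

end MaxOnes

theorem cor2_general (η : ℝ) (hη : η ∈ Set.Ioo (0:ℝ) 1) (ℓ m N : ℕ)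
    (δ : ℝ) (hδ : δ = (2:ℝ) ^ (-(ℓ * m * N : ℤ)))
    (β₁ : ℝ) (hβ₁ : β₁ ∈ Set.Ico (0:ℝ) 1)
    (B : Set ℝ) (hBcard : (B.ncard : ℝ) = δ ^ (-β₁))
    (B' : Set ℝ) (hB'B : B' ⊆ B) (hB'card : δ ^ η * (B.ncard : ℝ) ≤ (B'.ncard : ℝ))
    (R : ℕ → ℕ) (hu : uniform (ℓ * m) N B' R) (hpol : polarised η (ℓ * m) N R R) :
    (∀ p ∈ maxOnes N R, ∀ q ∈ maxOnes N R, p ≠ q → Disjoint (ellI ℓ p) (ellI ℓ q)) ∧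
    (1 - β₁ / (1 - η)) * ((ℓ : ℝ) * (N : ℝ)) ≤ ∑ p ∈ maxOnes N R, ((ellI ℓ p).card : ℝ) := by
  have h1η : 0 < 1 - η := sub_pos.2 hη.2
  have hδpos : 0 < δ := by rw [hδ]; positivity
  have hBcard' : (B.ncard : ℝ) = 2 ^ ((ℓ * m : ℕ) * N * β₁) := by
    rw [hBcard, hδ, ← Real.rpow_intCast, ← Real.rpow_mul zero_le_two]
    push_cast
    ring_nf
  have hBpos : 0 < B.ncard := by
    exact_mod_cast hBcard ▸ Real.rpow_pos_of_pos hδpos (-β₁)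
  have hBfin : B.Finite := Set.finite_of_ncard_pos hBpos
  have hB'ne : B'.Nonempty := by
    refine Set.nonempty_of_ncard_ne_zero (Nat.cast_ne_zero.1 (ne_of_gt (α := ℝ) ?_))
    exact hB'card.trans_lt' (mul_pos (Real.rpow_pos_of_pos hδpos η) (Nat.cast_pos.2 hBpos))
  have hK := one_sub_mul_card_ne_one_le_of_uniform hβ₁.1 (hBfin.subset hB'B) hB'ne hu hpol
    ((Nat.cast_le.2 (Set.ncard_le_ncard hB'B hBfin)).trans hBcard'.le)
  have hsplit : (#{s ∈ Finset.range N | R s = 1} : ℝ) + #{s ∈ Finset.range N | R s ≠ 1} = N := by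
    exact_mod_cast (Finset.card_filter_add_card_filter_not _).trans (Finset.card_range N)
  refine ⟨fun p hp q hq hpq => disjoint_ellI_of_mem_maxOnes ℓ hp hq hpq, ?_⟩
  rw [← Nat.cast_sum, sum_card_ellI_maxOnes, Nat.cast_mul]
  calc (1 - β₁ / (1 - η)) * ((ℓ : ℝ) * N) = ℓ * (N - β₁ * N / (1 - η)) := by ring
    _ ≤ ℓ * #{s ∈ Finset.range N | R s = 1} := by
      gcongr
      have : (#{s ∈ Finset.range N | R s ≠ 1} : ℝ) ≤ β₁ * N / (1 - η) := by
        rw [le_div_iff₀ h1η]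
        linarith
      linarith

/-- **Corollary (total length of the rescaled trivial-branching intervals).**
In the setting of the previous lemma, the intervals `ℓ𝓘`, `𝓘 ∈ 𝒩_{B′}`, are pairwise
disjoint subintervals of `{0,…,ℓN−1}` of total length at least `(1 − β₁/(1−η))·ℓN`. -/
theorem cor2 (η : ℝ) (hη : η ∈ Set.Ioo (0:ℝ) 1) (ℓ m N : ℕ)
    (δ : ℝ) (hδ : δ = (2:ℝ) ^ (-(ℓ * m * N : ℤ)))
    (β₁ : ℝ) (hβ₁ : β₁ ∈ Set.Ico (0:ℝ) 1)
    (B : Set ℝ) (hB : B ⊆ lat δ ∩ Set.Icc 0 1) (hBcard : (B.ncard : ℝ) = δ ^ (-β₁))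
    (B' : Set ℝ) (hB'B : B' ⊆ B) (hB'card : δ ^ η * (B.ncard : ℝ) ≤ (B'.ncard : ℝ))
    (R : ℕ → ℕ) (hu : uniform (ℓ * m) N B' R) (hpol : polarised η (ℓ * m) N R R) :
    (∀ p ∈ maxOnes N R, ∀ q ∈ maxOnes N R, p ≠ q → Disjoint (ellI ℓ p) (ellI ℓ q)) ∧
    (1 - β₁ / (1 - η)) * ((ℓ : ℝ) * (N : ℝ)) ≤ ∑ p ∈ maxOnes N R, ((ellI ℓ p).card : ℝ) :=
  cor2_general η hη ℓ m N δ hδ β₁ hβ₁ B hBcard B' hB'B hB'card R hu hpol
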